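/- arXiv:2008.07026 — 4 statements merged into one kernel-verified Lean document; each statement's English description precedes it below -/
import Mathlib

section
/- Let φ : ℝ → [0,∞) be a convex function with φ(0) = 0 that is strictly increasing on [0,∞) or strictly decreasing on (-∞,0]. Then for any a, b ∈ ℝ with a ≠ 0, the function Ψ(t) := φ(a·t - b) + φ(-a·t - b) is monotone increasing on (0,∞). If in addition φ is strictly convex, then Ψ is strictly increasing on (0,∞). -/
/-!
For `|s| ≤ 1` the points `c + s • x` and `c - s • x` are convex combinations of `c + x` and
`c - x` with the same two weights `(1 ± s) / 2` swapped, so adding the two convexity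
inequalities bounds `f (c + s • x) + f (c - s • x)` by `f (c + x) + f (c - x)`. Hence
`t ↦ f (c + t • x) + f (c - t • x)` is monotone for `t ≥ 0`, and `Ψ` is this function
with `c = -b`, `x = a`.
-/

open Set

section

variable {𝕜 E β : Type*} [Field 𝕜] [LinearOrder 𝕜] [IsStrictOrderedRing 𝕜]
  [AddCommGroup E] [Module 𝕜 E] [AddCommMonoid β] [PartialOrder β] [Module 𝕜 β]
  {f : E → β} {c x : E} {s : 𝕜}

lemma ConvexOn.add_sub_smul_le [IsOrderedAddMonoid β] (hf : ConvexOn 𝕜 univ f)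
    (hs : |s| ≤ 1) : f (c + s • x) + f (c - s • x) ≤ f (c + x) + f (c - x) := by
  obtain ⟨hs₁, hs₂⟩ := abs_le.mp hs
  have hp : 0 ≤ (1 + s) / 2 := by linarith
  have hm : 0 ≤ (1 - s) / 2 := by linarith
  have hsum : (1 + s) / 2 + (1 - s) / 2 = 1 := by ring
  calc f (c + s • x) + f (c - s • x)
      = f (((1 + s) / 2) • (c + x) + ((1 - s) / 2) • (c - x))
        + f (((1 - s) / 2) • (c + x) + ((1 + s) / 2) • (c - x)) := by
        congr 2 <;> module
    _ ≤ (((1 + s) / 2) • f (c + x) + ((1 - s) / 2) • f (c - x))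
        + (((1 - s) / 2) • f (c + x) + ((1 + s) / 2) • f (c - x)) :=
        add_le_add (hf.2 trivial trivial hp hm hsum)
          (hf.2 trivial trivial hm hp (by rwa [add_comm]))
    _ = f (c + x) + f (c - x) := by
        rw [add_add_add_comm, ← add_smul, add_comm (_ • f (c - x)), ← add_smul, hsum,
          one_smul, one_smul]

lemma StrictConvexOn.add_sub_smul_lt [IsOrderedCancelAddMonoid β]
    (hf : StrictConvexOn 𝕜 univ f) (hx : x ≠ 0) (hs : |s| < 1) :
    f (c + s • x) + f (c - s • x) < f (c + x) + f (c - x) := by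
  obtain ⟨hs₁, hs₂⟩ := abs_lt.mp hs
  have hp : 0 < (1 + s) / 2 := by linarith
  have hm : 0 < (1 - s) / 2 := by linarith
  have hsum : (1 + s) / 2 + (1 - s) / 2 = 1 := by ring
  have hne : c + x ≠ c - x := by
    intro h
    have h2 : (2 : 𝕜) • x = 0 := by
      rw [show (2 : 𝕜) • x = (c + x) - (c - x) by module, h, sub_self]
    exact hx ((smul_eq_zero.mp h2).resolve_left two_ne_zero)
  calc f (c + s • x) + f (c - s • x)
      = f (((1 + s) / 2) • (c + x) + ((1 - s) / 2) • (c - x))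
        + f (((1 - s) / 2) • (c + x) + ((1 + s) / 2) • (c - x)) := by
        congr 2 <;> module
    _ < (((1 + s) / 2) • f (c + x) + ((1 - s) / 2) • f (c - x))
        + (((1 - s) / 2) • f (c + x) + ((1 + s) / 2) • f (c - x)) :=
        add_lt_add (hf.2 trivial trivial hne hp hm hsum)
          (hf.2 trivial trivial hne hm hp (by rwa [add_comm]))
    _ = f (c + x) + f (c - x) := by
        rw [add_add_add_comm, ← add_smul, add_comm (_ • f (c - x)), ← add_smul, hsum,
          one_smul, one_smul]

lemma ConvexOn.monotoneOn_add_sub_smul [IsOrderedAddMonoid β] (hf : ConvexOn 𝕜 univ f)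
    (c x : E) : MonotoneOn (fun t : 𝕜 => f (c + t • x) + f (c - t • x)) (Ici 0) := by
  intro s (hs : 0 ≤ s) t (ht : 0 ≤ t) hst
  obtain rfl | ht := ht.eq_or_lt
  · rw [le_antisymm hst hs]
  have hst' : |s / t| ≤ 1 := by
    rw [abs_div, abs_of_nonneg hs, abs_of_pos ht]
    exact div_le_one_of_le₀ hst ht.le
  simpa only [smul_smul, div_mul_cancel₀ s ht.ne'] using
    hf.add_sub_smul_le (c := c) (x := t • x) hst'

lemma StrictConvexOn.strictMonoOn_add_sub_smul [IsOrderedCancelAddMonoid β]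
    (hf : StrictConvexOn 𝕜 univ f) (c : E) (hx : x ≠ 0) :
    StrictMonoOn (fun t : 𝕜 => f (c + t • x) + f (c - t • x)) (Ici 0) := by
  intro s (hs : 0 ≤ s) t (ht : 0 ≤ t) hst
  have ht : 0 < t := hs.trans_lt hst
  have hst' : |s / t| < 1 := by
    rw [abs_div, abs_of_nonneg hs, abs_of_pos ht]
    exact (div_lt_one ht).mpr hst
  simpa only [smul_smul, div_mul_cancel₀ s ht.ne'] using
    hf.add_sub_smul_lt (c := c) (smul_ne_zero ht.ne' hx) hst'

end

theorem stmt0_general (φ : ℝ → ℝ) (hconv : ConvexOn ℝ Set.univ φ)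
    (a b : ℝ) (ha : a ≠ 0) :
    MonotoneOn (fun t => φ (a * t - b) + φ (-a * t - b)) (Set.Ioi (0:ℝ)) ∧
    (StrictConvexOn ℝ Set.univ φ →
      StrictMonoOn (fun t => φ (a * t - b) + φ (-a * t - b)) (Set.Ioi (0:ℝ))) := by
  have hΨ : (fun t => φ (a * t - b) + φ (-a * t - b)) =
      fun t => φ (-b + t • a) + φ (-b - t • a) := by
    funext t
    rw [smul_eq_mul]
    ring_nf
  rw [hΨ]
  exact ⟨(hconv.monotoneOn_add_sub_smul (-b) a).mono Ioi_subset_Ici_self,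
    fun hstrict => (hstrict.strictMonoOn_add_sub_smul (-b) ha).mono Ioi_subset_Ici_self⟩

theorem stmt0 (φ : ℝ → ℝ) (hconv : ConvexOn ℝ Set.univ φ)
    (hnonneg : ∀ t, 0 ≤ φ t) (h0 : φ 0 = 0)
    (hmono : StrictMonoOn φ (Set.Ici (0:ℝ)) ∨ StrictAntiOn φ (Set.Iic (0:ℝ)))
    (a b : ℝ) (ha : a ≠ 0) :
    MonotoneOn (fun t => φ (a * t - b) + φ (-a * t - b)) (Set.Ioi (0:ℝ)) ∧
    (StrictConvexOn ℝ Set.univ φ →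
      StrictMonoOn (fun t => φ (a * t - b) + φ (-a * t - b)) (Set.Ioi (0:ℝ))) :=
  stmt0_general φ hconv a b ha
end

section
/- Let (X, Σ, μ) be a measure space with μ(X) < ∞, and for each u ∈ S^{n-1} let D_u ∈ Σ. Suppose there exists a Borel set S ⊆ S^{n-1} with H^{n-1}(S) > 0 such that μ(D_u) > 0 for every u ∈ S. Then there exist n linearly independent vectors u₁, ..., u_n ∈ S such that μ(D_{u₁} ∩ ⋯ ∩ D_{u_n}) > 0. -/
/-!
Fix `ε > 0` so small that `S' = {u ∈ S | ε ≤ μ (D u)}` still has positive `H^{n-1}`-measure.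
A proper subspace meets the unit sphere in an `H^{n-1}`-null set, so `S'` is not covered by
finitely many of them; choosing one vector at a time, this yields `w₀, …, w_{N-1} ∈ S'` any `n` of
which are linearly independent. Once `N ε > n μ(X)`, the function counting how many `D (w i)`
contain a point has integral exceeding `n μ(X)`, so it is `≥ n` on a set of positive measure, and
some `n` of the `D (w i)` meet in positive measure.
-/

open MeasureTheory Finset Module
open scoped ENNReal

theorem span_image_ne_top_of_card_lt {K V ι : Type*} [DivisionRing K] [AddCommGroup V]
    [Module K V] [FiniteDimensional K V] (v : ι → V) {T : Finset ι} (hT : #T < finrank K V) :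
    Submodule.span K (v '' T) ≠ ⊤ := by
  classical
  intro htop
  have hle := finrank_span_finset_le_card (R := K) (T.image v)
  rw [Set.finrank, coe_image, htop, finrank_top] at hle
  exact (hle.trans card_image_le).not_gt hT

section SphereAvoidance

variable {E : Type*} [NormedAddCommGroup E] [NormedSpace ℝ E] [MeasurableSpace E] [BorelSpace E]

theorem hausdorffMeasure_submodule_inter_sphere_eq_zero (W : Submodule ℝ E)
    [FiniteDimensional ℝ W] {d : ℝ} (hd : (finrank ℝ W : ℝ) ≤ d) {r : ℝ} (hr : r ≠ 0) :
    μH[d] ((W : Set E) ∩ Metric.sphere 0 r) = 0 := by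
  have hsphere : (W : Set E) ∩ Metric.sphere 0 r = (↑) '' Metric.sphere (0 : W) r := by
    ext x
    simp [and_comm]
  rw [hsphere, isometry_subtype_coe.hausdorffMeasure_image (Or.inl ((Nat.cast_nonneg _).trans hd))]
  exact nonpos_iff_eq_zero.1 <| (Measure.hausdorffMeasure_mono hd _).trans_eq
      (Measure.addHaar_sphere_of_ne_zero μH[finrank ℝ W] 0 hr)

variable [FiniteDimensional ℝ E]

theorem exists_mem_forall_notMem_of_hausdorffMeasure_pos {S : Set E} {r : ℝ} (hr : r ≠ 0)
    (hS : S ⊆ Metric.sphere 0 r) (hpos : 0 < μH[(finrank ℝ E : ℝ) - 1] S)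
    (G : Finset (Submodule ℝ E)) (hG : ∀ W ∈ G, W ≠ ⊤) : ∃ x ∈ S, ∀ W ∈ G, x ∉ W := by
  by_contra! hcover
  have hnull : μH[(finrank ℝ E : ℝ) - 1] (⋃ W ∈ G, (W : Set E) ∩ Metric.sphere 0 r) = 0 := by
    refine (measure_biUnion_null_iff G.countable_toSet).2 fun W hW => ?_
    have hlt : finrank ℝ W < finrank ℝ E := Submodule.finrank_lt (hG W hW)
    refine hausdorffMeasure_submodule_inter_sphere_eq_zero W ?_ hr
    have : (finrank ℝ W : ℝ) + 1 ≤ finrank ℝ E := by exact_mod_cast hlt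
    linarith
  refine hpos.ne' (measure_mono_null (fun x hx => ?_) hnull)
  obtain ⟨W, hW, hxW⟩ := hcover x hx
  exact Set.mem_biUnion hW ⟨hxW, hS hx⟩

theorem exists_linearIndepOn_of_hausdorffMeasure_pos {S : Set E} {r : ℝ} (hr : r ≠ 0)
    (hS : S ⊆ Metric.sphere 0 r) (hpos : 0 < μH[(finrank ℝ E : ℝ) - 1] S) (N : ℕ) :
    ∃ w : ℕ → E, (∀ i, w i ∈ S) ∧
      ∀ T ⊆ range N, #T ≤ finrank ℝ E → LinearIndepOn ℝ w (T : Set ℕ) := by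
  classical
  induction N with
  | zero =>
    obtain ⟨x, hx⟩ := nonempty_of_measure_ne_zero hpos.ne'
    refine ⟨fun _ => x, fun _ => hx, fun T hT _ => ?_⟩
    rw [range_zero, subset_empty] at hT
    simp [hT]
  | succ N ih =>
    obtain ⟨w, hwS, hw⟩ := ih
    let G := ((range N).powerset.filter (#· < finrank ℝ E)).image
      fun T : Finset ℕ => Submodule.span ℝ (w '' T)
    obtain ⟨x, hxS, hxG⟩ := exists_mem_forall_notMem_of_hausdorffMeasure_pos hr hS hpos G <| by
      simp only [G, Finset.mem_image, mem_filter]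
      rintro _ ⟨T, ⟨-, hT⟩, rfl⟩
      exact span_image_ne_top_of_card_lt w hT
    refine ⟨Function.update w N x, fun i => ?_, fun T hT hTcard => ?_⟩
    · rcases eq_or_ne i N with rfl | hi
      · simpa using hxS
      · simpa [hi] using hwS i
    have hagree : Set.EqOn (Function.update w N x) w (T.erase N) := fun i hi =>
      Function.update_of_ne (ne_of_mem_erase hi) _ _
    have hprev : T.erase N ⊆ range N := fun i hi => by
      have := hT (mem_of_mem_erase hi)
      simp only [Finset.mem_range] at this ⊢
      exact lt_of_le_of_ne (Nat.lt_succ_iff.1 this) (ne_of_mem_erase hi)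
    have hold : LinearIndepOn ℝ (Function.update w N x) (T.erase N : Set ℕ) :=
      (hw _ hprev (card_erase_le.trans hTcard)).congr hagree.symm
    by_cases hN : N ∈ T
    · rw [← insert_erase hN, coe_insert, linearIndepOn_insert (by simp)]
      refine ⟨hold, ?_⟩
      rw [hagree.image_eq, Function.update_self]
      refine hxG _ (Finset.mem_image_of_mem _ (mem_filter.2 ⟨mem_powerset.2 hprev, ?_⟩))
      rw [card_erase_of_mem hN]
      have := card_pos.2 ⟨N, hN⟩
      omega
    · rwa [erase_eq_of_notMem hN] at hold

end SphereAvoidance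

theorem exists_pos_measure_setOf_le {α : Type*} [MeasurableSpace α] (ν : Measure α)
    {s : Set α} {f : α → ℝ≥0∞} (hs : 0 < ν s) (hf : ∀ x ∈ s, 0 < f x) :
    ∃ ε ≠ 0, 0 < ν {x ∈ s | ε ≤ f x} := by
  have hcover : s ⊆ ⋃ k : ℕ, {x ∈ s | (k : ℝ≥0∞)⁻¹ ≤ f x} := fun x hx =>
    let ⟨k, hk⟩ := ENNReal.exists_inv_nat_lt (hf x hx).ne'
    Set.mem_iUnion.2 ⟨k, hx, hk.le⟩
  obtain ⟨k, hk⟩ := exists_measure_pos_of_not_measure_iUnion_null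
    fun h => hs.ne' (measure_mono_null hcover h)
  exact ⟨_, ENNReal.inv_ne_zero.2 (ENNReal.natCast_ne_top k), hk⟩

theorem exists_card_eq_measure_biInter_pos {ι X : Type*} [MeasurableSpace X] (μ : Measure X)
    {A : ι → Set X} (hA : ∀ i, NullMeasurableSet (A i) μ) {I : Finset ι} {n : ℕ}
    (h : n * μ Set.univ < ∑ i ∈ I, μ (A i)) : ∃ T ⊆ I, #T = n ∧ 0 < μ (⋂ i ∈ T, A i) := by
  classical
  by_contra! hnull
  have hfew : ∀ᵐ x ∂μ, #{i ∈ I | x ∈ A i} < n := by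
    refine measure_mono_null (fun x hx => ?_) ((measure_biUnion_null_iff
      (I.powersetCard n).countable_toSet).2 fun T hT => nonpos_iff_eq_zero.1
        (hnull T (mem_powersetCard.1 hT).1 (mem_powersetCard.1 hT).2))
    obtain ⟨T, hTsub, hTcard⟩ := exists_subset_card_eq (not_lt.1 hx)
    exact Set.mem_biUnion (mem_powersetCard.2 ⟨hTsub.trans (filter_subset _ _), hTcard⟩)
      (Set.mem_iInter₂.2 fun i hi => (mem_filter.1 (hTsub hi)).2)
  refine h.not_ge ?_
  calc ∑ i ∈ I, μ (A i) = ∫⁻ x, ∑ i ∈ I, (A i).indicator (fun _ => 1) x ∂μ := by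
        rw [lintegral_finsetSum' _ fun i _ => (aemeasurable_const.indicator₀ (hA i))]
        exact sum_congr rfl fun i _ => (lintegral_indicator_one₀ (hA i)).symm
    _ = ∫⁻ x, (#{i ∈ I | x ∈ A i} : ℝ≥0∞) ∂μ := by
        congr 1
        ext x
        simp [Set.indicator_apply]
    _ ≤ ∫⁻ _, (n : ℝ≥0∞) ∂μ := lintegral_mono_ae (hfew.mono fun x hx => by exact_mod_cast hx.le)
    _ = n * μ Set.univ := lintegral_const _

theorem stmt4_general {n : ℕ} {X : Type*} [MeasurableSpace X] (μ : Measure X)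
    [IsFiniteMeasure μ]
    (S : Set (EuclideanSpace ℝ (Fin n)))
    (hSsub : S ⊆ Metric.sphere (0 : EuclideanSpace ℝ (Fin n)) 1)
    (hSpos : 0 < μH[((n : ℝ) - 1)] S)
    (D : EuclideanSpace ℝ (Fin n) → Set X) (hDm : ∀ u, MeasurableSet (D u))
    (hDpos : ∀ u ∈ S, 0 < μ (D u)) :
    ∃ u : Fin n → EuclideanSpace ℝ (Fin n),
      (∀ i, u i ∈ S) ∧ LinearIndependent ℝ u ∧ 0 < μ (⋂ i, D (u i)) := by
  obtain ⟨ε, hε, hSε⟩ := exists_pos_measure_setOf_le _ hSpos hDpos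
  obtain ⟨N, hN⟩ := ENNReal.exists_nat_mul_gt hε (by finiteness : (n : ℝ≥0∞) * μ Set.univ ≠ ∞)
  obtain ⟨w, hwS, hw⟩ := exists_linearIndepOn_of_hausdorffMeasure_pos one_ne_zero
    ((Set.sep_subset _ _).trans hSsub) (by rwa [finrank_euclideanSpace_fin]) N
  have hmass : (n : ℝ≥0∞) * μ Set.univ < ∑ i ∈ range N, μ (D (w i)) := by
    calc (n : ℝ≥0∞) * μ Set.univ < N * ε := hN
      _ = ∑ _ ∈ range N, ε := by simp
      _ ≤ ∑ i ∈ range N, μ (D (w i)) := sum_le_sum fun i _ => (hwS i).2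
  obtain ⟨T, hTN, hTcard, hTpos⟩ :=
    exists_card_eq_measure_biInter_pos μ (fun i => (hDm (w i)).nullMeasurableSet) hmass
  let e := T.orderEmbOfFin hTcard
  refine ⟨w ∘ e, fun i => (hwS (e i)).1, ?_, ?_⟩
  · rw [← linearIndepOn_range_iff e.injective, range_orderEmbOfFin]
    exact hw T hTN (by simp [hTcard])
  · rw [Function.comp_def, ← Set.biInter_range (g := fun j => D (w j)), range_orderEmbOfFin]
    exact hTpos

theorem stmt4 {n : ℕ} {X : Type*} [MeasurableSpace X] (μ : Measure X)
    [IsFiniteMeasure μ]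
    (S : Set (EuclideanSpace ℝ (Fin n))) (hSm : MeasurableSet S)
    (hSsub : S ⊆ Metric.sphere (0 : EuclideanSpace ℝ (Fin n)) 1)
    (hSpos : 0 < μH[((n : ℝ) - 1)] S)
    (D : EuclideanSpace ℝ (Fin n) → Set X) (hDm : ∀ u, MeasurableSet (D u))
    (hDpos : ∀ u ∈ S, 0 < μ (D u)) :
    ∃ u : Fin n → EuclideanSpace ℝ (Fin n),
      (∀ i, u i ∈ S) ∧ LinearIndependent ℝ u ∧ 0 < μ (⋂ i, D (u i)) :=
  stmt4_general μ S hSsub hSpos D hDm hDpos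
end

section
/- Let E ⊆ ℝⁿ be a bounded Lebesgue measurable set. Suppose there is a dense set T of directions in S^{n-1} such that for every u ∈ T and for L^{n-1}-almost every x' in the orthogonal projection of E onto u^⊥, the one-dimensional section E ∩ (x' + ℝu) is equivalent (up to an L^1-null set) to a closed line segment. Then E is equal, up to an L^n-null set, to a convex body (a compact convex set with nonempty interior) whenever L^n(E) > 0. -/
/-!
Let `D` be the set of Lebesgue density points of `E`; by the density theorem `E = D` up to a
null set, so it suffices to show that `D` is convex: then `closure D` is a compact convex set
which differs from `D` by a subset of its frontier, hence by a null set, and it has nonempty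
interior because it has positive measure.

For `x, y ∈ D`, a point `M` of the open segment and a small radius `r`, choose a direction
`u ∈ T` so close to that of `y - x` that the line through `M` parallel to `u` passes within `r`
of `x` and of `y`. Slice the ball `B(M, r)` along `u`. A fiber whose section is (a.e.) a segment
and which meets `E` in positive measure both near `x` and near `y` covers the part of the fiber
inside `B(M, r)`. The fibers that miss `E` near `x` sweep out a slab inside `B(x, 3r) \ E`, and
likewise for `y`, which gives `|B(M, r) \ E| ≤ |B(x, 3r) \ E| + |B(y, 3r) \ E|`. The right-hand
side is `o(r^n)` because `x, y` are density points, so `M` is a density point as well.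
-/

open MeasureTheory Metric Filter Set Topology ENNReal Module

section DensityPoints

variable {α : Type*} [MetricSpace α] [MeasurableSpace α] (μ : Measure α)

def densityPoints (E : Set α) : Set α :=
  {x | Tendsto (fun r => μ (E ∩ closedBall x r) / μ (closedBall x r)) (𝓝[>] 0) (𝓝 1)}

variable {μ} {E : Set α}

lemma densityPoints_subset_closure : densityPoints μ E ⊆ closure E := by
  intro x hx
  by_contra hxE
  obtain ⟨ρ, hρ, hdisj⟩ := Metric.isOpen_iff.mp isClosed_closure.isOpen_compl x hxE
  have hzero : ∀ᶠ r in 𝓝[>] (0 : ℝ), 0 = μ (E ∩ closedBall x r) / μ (closedBall x r) := by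
    filter_upwards [Ioo_mem_nhdsGT hρ] with r hr
    have : E ∩ closedBall x r = ∅ :=
      eq_empty_of_forall_notMem fun z hz =>
        hdisj (closedBall_subset_ball hr.2 hz.2) (subset_closure hz.1)
    rw [this, measure_empty, ENNReal.zero_div]
  exact one_ne_zero (tendsto_nhds_unique hx (tendsto_const_nhds.congr' hzero))

lemma ae_eq_densityPoints [BorelSpace α] [SecondCountableTopology α]
    [HasBesicovitchCovering α] [IsLocallyFiniteMeasure μ] (hE : MeasurableSet E) :
    E =ᵐ[μ] densityPoints μ E := by
  filter_upwards [Besicovitch.ae_tendsto_measure_inter_div_of_measurableSet μ hE] with x hx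
  apply propext
  by_cases hxE : x ∈ E
  · simp only [indicator_of_mem hxE, Pi.one_apply] at hx
    exact iff_of_true hxE hx
  · simp only [indicator_of_notMem hxE] at hx
    exact iff_of_false hxE fun h => zero_ne_one (tendsto_nhds_unique hx h)

lemma mem_densityPoints_iff [ProperSpace α] [IsFiniteMeasureOnCompacts μ] [μ.IsOpenPosMeasure]
    (hE : MeasurableSet E) {x : α} :
    x ∈ densityPoints μ E ↔
      Tendsto (fun r => μ (closedBall x r \ E) / μ (closedBall x r)) (𝓝[>] 0) (𝓝 0) := by
  have hsum : ∀ᶠ r in 𝓝[>] (0 : ℝ), μ (E ∩ closedBall x r) / μ (closedBall x r) +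
      μ (closedBall x r \ E) / μ (closedBall x r) = 1 := by
    filter_upwards [self_mem_nhdsWithin] with r hr
    rw [ENNReal.div_add_div_same, inter_comm, measure_inter_add_sdiff _ hE,
      ENNReal.div_self (measure_closedBall_pos μ x hr).ne' measure_closedBall_lt_top.ne]
  constructor
  · intro h
    have := ENNReal.Tendsto.sub tendsto_const_nhds h (Or.inl one_ne_top)
    rw [tsub_self] at this
    exact this.congr' (hsum.mono fun r hr => ENNReal.sub_eq_of_eq_add_rev' one_ne_top hr.symm)
  · intro h
    have := ENNReal.Tendsto.sub tendsto_const_nhds h (Or.inl one_ne_top)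
    rw [tsub_zero] at this
    exact this.congr' (hsum.mono fun r hr => ENNReal.sub_eq_of_eq_add' one_ne_top hr.symm)

end DensityPoints

section ConvexBody

variable {V : Type*} [NormedAddCommGroup V] [NormedSpace ℝ V] [FiniteDimensional ℝ V]
  [MeasurableSpace V] [BorelSpace V] (μ : Measure V) [μ.IsAddHaarMeasure] {s : Set V}

lemma Convex.ae_eq_closure (hs : Convex ℝ s) : s =ᵐ[μ] closure s := by
  refine measure_symmDiff_eq_zero_iff.mp (measure_mono_null ?_ (hs.addHaar_frontier μ))
  rw [symmDiff_of_le subset_closure]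
  exact sdiff_subset_sdiff_right interior_subset

lemma Convex.interior_nonempty_of_measure_ne_zero (hs : Convex ℝ s) (h : μ s ≠ 0) :
    (interior s).Nonempty := by
  rw [hs.interior_nonempty_iff_affineSpan_eq_top]
  by_contra hspan
  exact h (measure_mono_null (subset_affineSpan ℝ s) (Measure.addHaar_affineSubspace μ _ hspan))

end ConvexBody

section Coordinates

variable {V : Type*} [NormedAddCommGroup V] [InnerProductSpace ℝ V]

def fiberCoord (u : V) (p : ℝ × (ℝ ∙ u)ᗮ) : V := p.2 + p.1 • u

variable {u : V}

lemma dist_fiberCoord_sq (hu : ‖u‖ = 1) (p q : ℝ × (ℝ ∙ u)ᗮ) :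
    dist (fiberCoord u p) (fiberCoord u q) ^ 2 = dist p.1 q.1 ^ 2 + dist p.2 q.2 ^ 2 := by
  have horth : inner ℝ ((p.2 - q.2 : (ℝ ∙ u)ᗮ) : V) ((p.1 - q.1) • u) = 0 := by
    rw [real_inner_smul_right, real_inner_comm,
      Submodule.mem_orthogonal_singleton_iff_inner_right.mp (p.2 - q.2).2, mul_zero]
  have h : fiberCoord u p - fiberCoord u q =
      ((p.2 - q.2 : (ℝ ∙ u)ᗮ) : V) + (p.1 - q.1) • u := by
    simp only [fiberCoord, Submodule.coe_sub, sub_smul]; abel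
  rw [dist_eq_norm, h, sq, norm_add_sq_eq_norm_sq_add_norm_sq_real horth, norm_smul, hu, mul_one,
    Real.norm_eq_abs, Real.dist_eq, dist_eq_norm, Submodule.coe_norm]
  ring

lemma continuous_fiberCoord : Continuous (fiberCoord u) := by
  unfold fiberCoord; fun_prop

lemma fiberCoord_surjective (hu : ‖u‖ = 1) : Function.Surjective (fiberCoord u) := by
  intro v
  have hz : v - inner ℝ u v • u ∈ (ℝ ∙ u)ᗮ := by
    rw [Submodule.mem_orthogonal_singleton_iff_inner_right, inner_sub_right, real_inner_smul_right,
      real_inner_self_eq_norm_sq, hu]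
    ring
  exact ⟨(inner ℝ u v, ⟨_, hz⟩), by simp [fiberCoord]⟩

lemma max_dist_le_dist_fiberCoord (hu : ‖u‖ = 1) (p q : ℝ × (ℝ ∙ u)ᗮ) :
    max (dist p.1 q.1) (dist p.2 q.2) ≤ dist (fiberCoord u p) (fiberCoord u q) := by
  have h := dist_fiberCoord_sq hu p q
  refine max_le ?_ ?_ <;>
    refine (pow_le_pow_iff_left₀ dist_nonneg dist_nonneg two_ne_zero).mp ?_ <;>
    nlinarith [sq_nonneg (dist p.1 q.1), sq_nonneg (dist p.2 q.2)]

lemma dist_fiberCoord_le (hu : ‖u‖ = 1) (p q : ℝ × (ℝ ∙ u)ᗮ) :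
    dist (fiberCoord u p) (fiberCoord u q) ≤ dist p.1 q.1 + dist p.2 q.2 := by
  refine (pow_le_pow_iff_left₀ dist_nonneg (by positivity) two_ne_zero).mp ?_
  rw [dist_fiberCoord_sq hu]
  nlinarith [mul_nonneg (dist_nonneg (x := p.1) (y := q.1)) (dist_nonneg (x := p.2) (y := q.2))]

variable [FiniteDimensional ℝ V] [MeasurableSpace V] [BorelSpace V]

lemma measurePreserving_fiberCoord (hu : ‖u‖ = 1) :
    MeasurePreserving (fiberCoord u) (volume.prod volume) volume := by
  let Ψ : WithLp 2 (ℝ × (ℝ ∙ u)ᗮ) ≃ₗᵢ[ℝ] V :=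
    (LinearIsometryEquiv.withLpProdCongr 2 (LinearIsometryEquiv.toSpanUnitSingleton u hu)
      (LinearIsometryEquiv.refl ℝ _)).trans (ℝ ∙ u).orthogonalDecomposition.symm
  have hΨ : fiberCoord u = Ψ ∘ WithLp.toLp 2 := by
    ext p; simp [Ψ, fiberCoord, add_comm]
  rw [hΨ]
  refine Ψ.measurePreserving.comp ?_
  exact WithLp.volume_preserving_toLp ℝ (ℝ ∙ u)ᗮ

lemma ae_volume_orthogonal_of_ae_hausdorffMeasure {d : ℝ} (hd : (finrank ℝ V : ℝ) - 1 = d)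
    (hu : u ≠ 0) {P : V → Prop}
    (h : ∀ᵐ x ∂(μH[d] : Measure V).restrict {x | inner ℝ x u = 0}, P x) :
    ∀ᵐ z : (ℝ ∙ u)ᗮ, P z := by
  subst hd
  have hrank : ((finrank ℝ (ℝ ∙ u)ᗮ : ℕ) : ℝ) = finrank ℝ V - 1 := by
    have := (ℝ ∙ u).finrank_add_finrank_orthogonal
    rw [finrank_span_singleton hu] at this
    rw [← this]; push_cast; ring
  have hval : Isometry (Subtype.val : (ℝ ∙ u)ᗮ → V) := isometry_subtype_coe
  have hrange : range (Subtype.val : (ℝ ∙ u)ᗮ → V) ⊆ {x | inner ℝ x u = 0} := by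
    rintro _ ⟨z, rfl⟩
    exact Submodule.mem_orthogonal_singleton_iff_inner_left.mp z.2
  rw [← hrank] at h
  have hH : ∀ᵐ (z : (ℝ ∙ u)ᗮ) ∂μH[finrank ℝ (ℝ ∙ u)ᗮ], P z := by
    have h' := ae_restrict_of_ae_restrict_of_subset hrange h
    rw [← hval.map_hausdorffMeasure (Or.inl (Nat.cast_nonneg _))] at h'
    exact ae_of_ae_map hval.continuous.aemeasurable h'
  exact (Measure.absolutelyContinuous_isAddHaarMeasure _ _).ae_le hH

end Coordinates

lemma volume_Icc_diff_eq_zero_of_ae_eq_Icc {S : Set ℝ} {a b p₁ q₁ p₂ q₂ s t : ℝ}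
    (hS : S =ᵐ[volume] Icc a b) (h₁ : volume (S ∩ Icc p₁ q₁) ≠ 0)
    (h₂ : volume (S ∩ Icc p₂ q₂) ≠ 0) (hs : q₁ ≤ s) (ht : t ≤ p₂) :
    volume (Icc s t \ S) = 0 := by
  rw [measure_congr (hS.inter (ae_eq_refl (Icc p₁ q₁)))] at h₁
  rw [measure_congr (hS.inter (ae_eq_refl (Icc p₂ q₂)))] at h₂
  simp only [Icc_inter_Icc, Real.volume_Icc, ne_eq, ENNReal.ofReal_eq_zero, not_le, sub_pos,
    max_lt_iff, lt_min_iff] at h₁ h₂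
  have hsub : Icc s t ⊆ Icc a b := Icc_subset_Icc (by linarith) (by linarith)
  exact measure_mono_null (sdiff_subset_sdiff_left hsub) (ae_eq_set.mp hS.symm).1

section Fibers

variable {V : Type*} [NormedAddCommGroup V] [InnerProductSpace ℝ V] [FiniteDimensional ℝ V]
  [MeasurableSpace V] [BorelSpace V] {u : V} {E : Set V}

def HasSegmentSections (u : V) (E : Set V) : Prop :=
  ∀ᵐ z : (ℝ ∙ u)ᗮ, ∃ a b : ℝ, volume (symmDiff {s : ℝ | (z : V) + s • u ∈ E} (Icc a b)) = 0

def nullFibers (u : V) (E : Set V) (I : Set ℝ) : Set (ℝ ∙ u)ᗮ :=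
  {z | volume ({s | (z : V) + s • u ∈ E} ∩ I) = 0}

lemma measurableSet_nullFibers (hE : MeasurableSet E) {I : Set ℝ} (hI : MeasurableSet I) :
    MeasurableSet (nullFibers u E I) := by
  have hA : MeasurableSet (fiberCoord u ⁻¹' E ∩ I ×ˢ univ) :=
    (hE.preimage continuous_fiberCoord.measurable).inter (hI.prod MeasurableSet.univ)
  convert measurable_measure_prodMk_right (μ := volume) hA (measurableSet_singleton 0) using 1
  ext z
  simp only [nullFibers, mem_ofPred_eq, preimage_inter, mk_preimage_prod_left, mem_univ,
    mem_preimage, mem_singleton_iff]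
  rfl

lemma measure_inter_nullFibers_le (hu : ‖u‖ = 1) (hE : MeasurableSet E) {t r : ℝ}
    {ζ : (ℝ ∙ u)ᗮ} {x : V} (hx : dist (fiberCoord u (t, ζ)) x ≤ r) :
    ENNReal.ofReal (2 * r) * volume (closedBall ζ r ∩ nullFibers u E (Icc (t - r) (t + r))) ≤
      volume (closedBall x (3 * r) \ E) := by
  set Bad := closedBall ζ r ∩ nullFibers u E (Icc (t - r) (t + r))
  set S := Icc (t - r) (t + r) ×ˢ Bad
  have hA : MeasurableSet (fiberCoord u ⁻¹' E) := hE.preimage continuous_fiberCoord.measurable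
  have hS : MeasurableSet S := measurableSet_Icc.prod
    (measurableSet_closedBall.inter (measurableSet_nullFibers hE measurableSet_Icc))
  have hvolS : (volume.prod volume) S = ENNReal.ofReal (2 * r) * volume Bad := by
    rw [Measure.prod_prod, Real.volume_Icc]
    ring_nf
  have hSE : (volume.prod volume) (S ∩ fiberCoord u ⁻¹' E) = 0 := by
    rw [Measure.prod_apply_symm (hS.inter hA)]
    refine (lintegral_congr fun z => ?_).trans lintegral_zero
    by_cases hz : z ∈ Bad
    · exact measure_mono_null (t := {s | (z : V) + s • u ∈ E} ∩ _)
        (fun s hs => ⟨hs.2, hs.1.1⟩) hz.2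
    · exact measure_mono_null (fun s hs => hz hs.1.2) measure_empty
  have hSsub : S \ fiberCoord u ⁻¹' E ⊆ fiberCoord u ⁻¹' (closedBall x (3 * r) \ E) := by
    rintro ⟨s, z⟩ ⟨⟨hs, hz⟩, hzE⟩
    refine ⟨?_, hzE⟩
    rw [← Real.closedBall_eq_Icc] at hs
    calc dist (fiberCoord u (s, z)) x
        ≤ dist (fiberCoord u (s, z)) (fiberCoord u (t, ζ)) + dist (fiberCoord u (t, ζ)) x :=
          dist_triangle _ _ _
      _ ≤ (r + r) + r := add_le_add ((dist_fiberCoord_le hu _ _).trans (add_le_add hs hz.1)) hx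
      _ = 3 * r := by ring
  calc ENNReal.ofReal (2 * r) * volume Bad
      = (volume.prod volume) S := hvolS.symm
    _ ≤ (volume.prod volume) (S ∩ fiberCoord u ⁻¹' E) +
        (volume.prod volume) (S \ fiberCoord u ⁻¹' E) := measure_le_inter_add_sdiff _ _ _
    _ ≤ (volume.prod volume) (fiberCoord u ⁻¹' (closedBall x (3 * r) \ E)) := by
      rw [hSE, zero_add]; exact measure_mono hSsub
    _ = volume (closedBall x (3 * r) \ E) :=
      (measurePreserving_fiberCoord hu).measure_preimage
        (measurableSet_closedBall.diff hE).nullMeasurableSet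

lemma measure_closedBall_diff_le_nullFibers (hu : ‖u‖ = 1) (hE : MeasurableSet E)
    (hsec : HasSegmentSections u E)
    {c r t₁ t₂ : ℝ} (ζ : (ℝ ∙ u)ᗮ) (h₁ : t₁ + r ≤ c - r) (h₂ : c + r ≤ t₂ - r) :
    volume (closedBall (fiberCoord u (c, ζ)) r \ E) ≤ ENNReal.ofReal (2 * r) *
      volume (closedBall ζ r ∩
        (nullFibers u E (Icc (t₁ - r) (t₁ + r)) ∪ nullFibers u E (Icc (t₂ - r) (t₂ + r)))) := by
  set Bad := closedBall ζ r ∩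
    (nullFibers u E (Icc (t₁ - r) (t₁ + r)) ∪ nullFibers u E (Icc (t₂ - r) (t₂ + r)))
  set Box := Icc (c - r) (c + r) ×ˢ closedBall ζ r
  have hA : MeasurableSet (fiberCoord u ⁻¹' E) := hE.preimage continuous_fiberCoord.measurable
  have hBad : MeasurableSet Bad := measurableSet_closedBall.inter
    ((measurableSet_nullFibers hE measurableSet_Icc).union
      (measurableSet_nullFibers hE measurableSet_Icc))
  have hfiber : ∀ᵐ z : (ℝ ∙ u)ᗮ, volume ((fun s => (s, z)) ⁻¹' (Box \ fiberCoord u ⁻¹' E)) ≤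
      Bad.indicator (fun _ => ENNReal.ofReal (2 * r)) z := by
    filter_upwards [hsec] with z ⟨a, b, hab⟩
    by_cases hzBad : z ∈ Bad
    · rw [indicator_of_mem hzBad]
      calc volume ((fun s => (s, z)) ⁻¹' (Box \ fiberCoord u ⁻¹' E))
          ≤ volume (Icc (c - r) (c + r)) := measure_mono fun s hs => hs.1.1
        _ = ENNReal.ofReal (2 * r) := by rw [Real.volume_Icc]; ring_nf
    rw [indicator_of_notMem hzBad, nonpos_iff_eq_zero]
    by_cases hzζ : z ∈ closedBall ζ r
    · refine measure_mono_null (t := Icc (c - r) (c + r) \ {s | (z : V) + s • u ∈ E})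
        (fun s hs => ⟨hs.1.1, hs.2⟩)
        (volume_Icc_diff_eq_zero_of_ae_eq_Icc (p₁ := t₁ - r) (q₂ := t₂ + r)
          (measure_symmDiff_eq_zero_iff.mp hab) ?_ ?_ h₁ h₂)
      · exact fun h => hzBad ⟨hzζ, Or.inl h⟩
      · exact fun h => hzBad ⟨hzζ, Or.inr h⟩
    · exact measure_mono_null (fun s hs => hzζ hs.1.2) measure_empty
  have hsub : fiberCoord u ⁻¹' (closedBall (fiberCoord u (c, ζ)) r \ E) ⊆
      Box \ fiberCoord u ⁻¹' E := by
    rintro p ⟨hp, hpE⟩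
    have hmax := (max_dist_le_dist_fiberCoord hu p (c, ζ)).trans hp
    rw [max_le_iff] at hmax
    exact ⟨⟨Real.closedBall_eq_Icc ▸ hmax.1, hmax.2⟩, hpE⟩
  calc volume (closedBall (fiberCoord u (c, ζ)) r \ E)
      = (volume.prod volume) (fiberCoord u ⁻¹' (closedBall (fiberCoord u (c, ζ)) r \ E)) :=
        ((measurePreserving_fiberCoord hu).measure_preimage
          (measurableSet_closedBall.diff hE).nullMeasurableSet).symm
    _ ≤ (volume.prod volume) (Box \ fiberCoord u ⁻¹' E) := measure_mono hsub
    _ = ∫⁻ z, volume ((fun s => (s, z)) ⁻¹' (Box \ fiberCoord u ⁻¹' E)) :=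
        Measure.prod_apply_symm ((measurableSet_Icc.prod measurableSet_closedBall).diff hA)
    _ ≤ ∫⁻ z, Bad.indicator (fun _ => ENNReal.ofReal (2 * r)) z := lintegral_mono_ae hfiber
    _ = ENNReal.ofReal (2 * r) * volume Bad := lintegral_indicator_const hBad _

lemma measure_closedBall_diff_le_of_fibers (hu : ‖u‖ = 1) (hE : MeasurableSet E)
    (hsec : HasSegmentSections u E)
    {M x y : V} {r L₁ L₂ : ℝ} (h₁ : 2 * r ≤ L₁) (h₂ : 2 * r ≤ L₂)
    (hx : dist (M - L₁ • u) x ≤ r) (hy : dist (M + L₂ • u) y ≤ r) :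
    volume (closedBall M r \ E) ≤
      volume (closedBall x (3 * r) \ E) + volume (closedBall y (3 * r) \ E) := by
  obtain ⟨⟨c, ζ⟩, rfl⟩ := fiberCoord_surjective hu M
  have hx' : dist (fiberCoord u (c - L₁, ζ)) x ≤ r := by
    convert hx using 2; simp only [fiberCoord, sub_smul]; abel
  have hy' : dist (fiberCoord u (c + L₂, ζ)) y ≤ r := by
    convert hy using 2; simp only [fiberCoord, add_smul]; abel
  calc volume (closedBall (fiberCoord u (c, ζ)) r \ E)
      ≤ ENNReal.ofReal (2 * r) * volume (closedBall ζ r ∩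
          (nullFibers u E (Icc (c - L₁ - r) (c - L₁ + r)) ∪
            nullFibers u E (Icc (c + L₂ - r) (c + L₂ + r)))) :=
        measure_closedBall_diff_le_nullFibers hu hE hsec ζ (by linarith) (by linarith)
    _ ≤ ENNReal.ofReal (2 * r) * volume (closedBall ζ r ∩
          nullFibers u E (Icc (c - L₁ - r) (c - L₁ + r))) +
        ENNReal.ofReal (2 * r) * volume (closedBall ζ r ∩
          nullFibers u E (Icc (c + L₂ - r) (c + L₂ + r))) := by
      rw [← mul_add, inter_union_distrib_left]
      gcongr
      exact measure_union_le _ _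
    _ ≤ _ :=
      add_le_add (measure_inter_nullFibers_le hu hE hx') (measure_inter_nullFibers_le hu hE hy')

end Fibers

lemma exists_mem_dist_le_of_dense_sphere {V : Type*} [NormedAddCommGroup V] [NormedSpace ℝ V]
    {T : Set V} (hdense : sphere (0 : V) 1 ⊆ closure T)
    {x y : V} (hxy : x ≠ y) {a b : ℝ} (ha : 0 ≤ a) (hb : 0 ≤ b) (hab : a + b = 1) {r : ℝ}
    (hr : 0 < r) :
    ∃ u ∈ T, dist (a • x + b • y - (b * ‖y - x‖) • u) x ≤ r ∧
      dist (a • x + b • y + (a * ‖y - x‖) • u) y ≤ r := by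
  obtain rfl : a = 1 - b := by linarith
  set W := ‖y - x‖
  have hW : 0 < W := norm_pos_iff.mpr (sub_ne_zero.mpr hxy.symm)
  set w := W⁻¹ • (y - x)
  have hw : w ∈ sphere (0 : V) 1 := by
    rw [mem_sphere_zero_iff_norm, norm_smul, norm_inv, norm_norm, inv_mul_cancel₀ hW.ne']
  obtain ⟨u, huT, hwu⟩ := Metric.mem_closure_iff.mp (hdense hw) (r / W) (div_pos hr hW)
  have hnear : ∀ c, 0 ≤ c → c ≤ 1 → ‖(c * W) • (w - u)‖ ≤ r := by
    intro c hc₀ hc₁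
    rw [norm_smul, Real.norm_of_nonneg (by positivity), ← dist_eq_norm]
    calc c * W * dist w u ≤ 1 * W * (r / W) := by gcongr
      _ = r := by field_simp
  have hWw : W • w = y - x := by rw [smul_smul, mul_inv_cancel₀ hW.ne', one_smul]
  refine ⟨u, huT, ?_, ?_⟩
  · convert hnear b hb (by linarith) using 1
    rw [dist_eq_norm, mul_smul, mul_smul, smul_sub W w u, hWw]
    congr 1; module
  · convert hnear (1 - b) ha (by linarith) using 1
    rw [dist_eq_norm, mul_smul, mul_smul, smul_sub W w u, hWw, ← norm_neg]
    congr 1; module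

section Convexity

variable {V : Type*} [NormedAddCommGroup V] [InnerProductSpace ℝ V] [FiniteDimensional ℝ V]
  [MeasurableSpace V] [BorelSpace V]

theorem convex_densityPoints {E : Set V} (hE : MeasurableSet E) {T : Set V}
    (hT : T ⊆ sphere 0 1) (hdense : sphere (0 : V) 1 ⊆ closure T)
    (hsec : ∀ u ∈ T, HasSegmentSections u E) :
    Convex ℝ (densityPoints volume E) := by
  rw [convex_iff_pairwise_pos]
  intro x hx y hy hxy a b ha hb hab
  rw [mem_densityPoints_iff hE, ENNReal.tendsto_nhds_zero] at hx hy ⊢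
  intro ε hε
  set M := a • x + b • y
  set d := finrank ℝ V
  -- Two defects of relative size `δ` at radius `3r` cost `2 * 3 ^ d * δ ≤ ε` at radius `r`.
  set δ : ℝ≥0∞ := ε / (2 * 3 ^ d)
  have hδ : 0 < δ := ENNReal.div_pos hε.ne' (by finiteness)
  have hW : 0 < ‖y - x‖ := norm_pos_iff.mpr (sub_ne_zero.mpr hxy.symm)
  have hL : 0 < min (b * ‖y - x‖) (a * ‖y - x‖) := lt_min (by positivity) (by positivity)
  filter_upwards [eventually_nhdsGT_zero_mul_left three_pos (hx δ hδ),
    eventually_nhdsGT_zero_mul_left three_pos (hy δ hδ), Ioo_mem_nhdsGT (half_pos hL)]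
    with r hrx hry hr
  obtain ⟨u, huT, hux, huy⟩ := exists_mem_dist_le_of_dense_sphere hdense hxy ha.le hb.le hab hr.1
  have hslice := measure_closedBall_diff_le_of_fibers (mem_sphere_zero_iff_norm.mp (hT huT)) hE
    (hsec u huT) (by linarith [hr.2, min_le_left (b * ‖y - x‖) (a * ‖y - x‖)])
    (by linarith [hr.2, min_le_right (b * ‖y - x‖) (a * ‖y - x‖)]) hux huy
  have hball : ∀ z : V, volume (closedBall z (3 * r)) = 3 ^ d * volume (closedBall M r) := by
    intro z
    rw [Measure.addHaar_closedBall_mul volume z zero_le_three hr.1.le,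
      Measure.addHaar_closedBall_center volume M, ENNReal.ofReal_pow zero_le_three,
      ENNReal.ofReal_ofNat]
  have hratio : ∀ (z : V) {ρ : ℝ} (c : ℝ≥0∞), 0 < ρ →
      (volume (closedBall z ρ \ E) / volume (closedBall z ρ) ≤ c ↔
        volume (closedBall z ρ \ E) ≤ c * volume (closedBall z ρ)) := fun z _ c hρ =>
    ENNReal.div_le_iff (measure_closedBall_pos volume z hρ).ne' measure_closedBall_lt_top.ne
  rw [hratio M ε hr.1]
  rw [hratio x δ (by linarith [hr.1])] at hrx
  rw [hratio y δ (by linarith [hr.1])] at hry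
  calc volume (closedBall M r \ E)
      ≤ volume (closedBall x (3 * r) \ E) + volume (closedBall y (3 * r) \ E) := hslice
    _ ≤ δ * volume (closedBall x (3 * r)) + δ * volume (closedBall y (3 * r)) := add_le_add hrx hry
    _ = (2 * 3 ^ d) * δ * volume (closedBall M r) := by rw [hball, hball]; ring
    _ ≤ ε * volume (closedBall M r) := by gcongr; exact ENNReal.mul_div_le

end Convexity

theorem stmt6 {n : ℕ} (E : Set (EuclideanSpace ℝ (Fin n))) (hE : MeasurableSet E)
    (hb : Bornology.IsBounded E)
    (T : Set (EuclideanSpace ℝ (Fin n)))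
    (hT : T ⊆ Metric.sphere (0 : EuclideanSpace ℝ (Fin n)) 1)
    (hdense : Metric.sphere (0 : EuclideanSpace ℝ (Fin n)) 1 ⊆ closure T)
    (hsec : ∀ u ∈ T,
      ∀ᵐ x' ∂((μH[((n : ℝ) - 1)] :
          Measure (EuclideanSpace ℝ (Fin n))).restrict
            {x : EuclideanSpace ℝ (Fin n) | (inner ℝ x u : ℝ) = 0}),
        ∃ a b : ℝ,
          volume (symmDiff {s : ℝ | x' + s • u ∈ E} (Set.Icc a b)) = 0)
    (hpos : 0 < volume E) :
    ∃ K : Set (EuclideanSpace ℝ (Fin n)),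
      IsCompact K ∧ Convex ℝ K ∧ (interior K).Nonempty ∧
        volume (symmDiff E K) = 0 := by
  set D := densityPoints volume E
  have hED : E =ᵐ[volume] D := ae_eq_densityPoints hE
  have hconv : Convex ℝ D := convex_densityPoints hE hT hdense fun u hu =>
    ae_volume_orthogonal_of_ae_hausdorffMeasure (by rw [finrank_euclideanSpace_fin])
      (ne_of_mem_sphere (hT hu) one_ne_zero) (hsec u hu)
  have hD : volume D ≠ 0 := (measure_congr hED ▸ hpos).ne'
  refine ⟨closure D, (hb.closure.subset densityPoints_subset_closure).isCompact_closure,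
    hconv.closure, hconv.closure.interior_nonempty_of_measure_ne_zero volume
      fun h => hD (measure_mono_null subset_closure h), ?_⟩
  exact measure_symmDiff_eq_zero_iff.mpr (hED.trans (hconv.ae_eq_closure volume))
end

section
/- Let K ⊆ ℝⁿ be a convex body. If there exists a dense set T of directions in S^{n-1} such that for each u ∈ T the midpoints of all chords of K parallel to u lie in a single affine hyperplane, then for every direction u ∈ S^{n-1} the midpoints of chords of K parallel to u lie in a single affine hyperplane. -/
open Set

/-- The midpoints of all chords of `K` parallel to `u` lie in the affine
hyperplane `{y | ⟪v, y⟫ = c}`.  For `x` whose line `x + ℝu` meets `K`, the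
chord is the segment with endpoint parameters `sInf`/`sSup` of
`{s | x + s • u ∈ K}`, and its midpoint is the average of the endpoints. -/
def chordMidpointsIn {n : ℕ} (K : Set (EuclideanSpace ℝ (Fin n)))
    (u v : EuclideanSpace ℝ (Fin n)) (c : ℝ) : Prop :=
  ∀ x : EuclideanSpace ℝ (Fin n), {s : ℝ | x + s • u ∈ K}.Nonempty →
    (inner ℝ v (x + (((sInf {s : ℝ | x + s • u ∈ K}) +
        (sSup {s : ℝ | x + s • u ∈ K})) / 2) • u) : ℝ) = c

/-- The midpoints of all chords of `K` parallel to `u` lie in a single affine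
hyperplane. -/
def chordMidpointsInHyperplane {n : ℕ} (K : Set (EuclideanSpace ℝ (Fin n)))
    (u : EuclideanSpace ℝ (Fin n)) : Prop :=
  ∃ v : EuclideanSpace ℝ (Fin n), ∃ c : ℝ, v ≠ 0 ∧ chordMidpointsIn K u v c

/-!
If the midpoints of the chords of `K` parallel to `u` lie in the hyperplane `⟪w, ·⟫ = d`,
normalised so that `⟪w, u⟫ = 1`, then `K` is invariant under the affine reflection
`y ↦ y - 2 (⟪w, y⟫ - d) u`, and conversely: the reflection maps each chord parallel to `u` onto
itself, reversing it, so it fixes the chord's midpoint. Since `K` has interior points,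
invariance bounds `w` and `d`, so the parameters `(u, w, d)` of the reflections preserving `K`
form a compact set. Its projection to the sphere is closed and contains `T`, hence is the whole
sphere.
-/

open Metric
open scoped RealInnerProductSpace

theorem sInf_add_sSup_eq_of_forall_sub_mem {S : Set ℝ} {a : ℝ} (hne : S.Nonempty)
    (hbdd : Bornology.IsBounded S) (h : ∀ s ∈ S, a - s ∈ S) : sInf S + sSup S = a := by
  have hsup : sSup S ≤ a - sInf S :=
    csSup_le hne fun s hs => le_sub_comm.mp (csInf_le hbdd.bddBelow (h s hs))
  have hinf : a - sSup S ≤ sInf S :=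
    le_csInf hne fun s hs => sub_le_comm.mp (le_csSup hbdd.bddAbove (h s hs))
  linarith

theorem IsCompact.sInf_add_sSup_mem {S : Set ℝ} (hS : IsCompact S) (hconn : S.OrdConnected)
    (h0 : 0 ∈ S) : sInf S + sSup S ∈ S := by
  have hinf : sInf S ≤ 0 := csInf_le hS.bddBelow h0
  have hsup : 0 ≤ sSup S := le_csSup hS.bddAbove h0
  exact hconn.out (hS.sInf_mem ⟨0, h0⟩) (hS.sSup_mem ⟨0, h0⟩) ⟨by linarith, by linarith⟩

section LineSection

variable {E : Type*} [NormedAddCommGroup E] [NormedSpace ℝ E] {K : Set E}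

theorem Bornology.IsBounded.setOf_add_smul_mem (hK : Bornology.IsBounded K) (x : E) {u : E}
    (hu : u ≠ 0) : Bornology.IsBounded {s : ℝ | x + s • u ∈ K} := by
  obtain ⟨R, hR⟩ := isBounded_iff_forall_norm_le.mp hK
  refine isBounded_iff_forall_norm_le.mpr ⟨(R + ‖x‖) / ‖u‖, fun s hs => ?_⟩
  rw [le_div_iff₀ (norm_pos_iff.mpr hu), ← norm_smul]
  calc ‖s • u‖ = ‖(x + s • u) - x‖ := by rw [add_sub_cancel_left]
    _ ≤ ‖x + s • u‖ + ‖x‖ := norm_sub_le _ _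
    _ ≤ R + ‖x‖ := by gcongr; exact hR _ hs

theorem IsCompact.setOf_add_smul_mem (hK : IsCompact K) (x : E) {u : E} (hu : u ≠ 0) :
    IsCompact {s : ℝ | x + s • u ∈ K} :=
  Metric.isCompact_of_isClosed_isBounded (hK.isClosed.preimage (by fun_prop))
    (hK.isBounded.setOf_add_smul_mem x hu)

theorem Convex.ordConnected_setOf_add_smul_mem (hK : Convex ℝ K) (x u : E) :
    OrdConnected {s : ℝ | x + s • u ∈ K} := by
  have h : {s : ℝ | x + s • u ∈ K} = AffineMap.lineMap x (x + u) ⁻¹' K := by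
    ext s
    simp [AffineMap.lineMap_apply, add_comm]
  exact h ▸ (hK.affine_preimage _).ordConnected

end LineSection

theorem exists_closedBall_subset_of_interior_nonempty {X : Type*} [PseudoMetricSpace X]
    {K : Set X} (hK : (interior K).Nonempty) :
    ∃ p r, 0 < r ∧ closedBall p r ⊆ K := by
  obtain ⟨p, hp⟩ := hK
  obtain ⟨r, hr, hsub⟩ := nhds_basis_closedBall.mem_iff.mp (mem_interior_iff_mem_nhds.mp hp)
  exact ⟨p, r, hr, hsub⟩

section AffineReflection

variable {E : Type*} [NormedAddCommGroup E] [InnerProductSpace ℝ E]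

/-- For `⟪w, u⟫ = 1`, the affine involution that fixes the hyperplane `{y | ⟪w, y⟫ = d}`
pointwise and reverses the direction `u`. -/
def affineReflection (u w : E) (d : ℝ) (y : E) : E :=
  y - (2 * (⟪w, y⟫ - d)) • u

theorem affineReflection_add_smul {u w : E} (d : ℝ) (hwu : ⟪w, u⟫ = 1) (x : E) (s : ℝ) :
    affineReflection u w d (x + s • u) = x + (2 * (d - ⟪w, x⟫) - s) • u := by
  rw [affineReflection, inner_add_right, real_inner_smul_right, hwu]
  module

theorem continuous_affineReflection_apply (y : E) :
    Continuous fun q : E × E × ℝ => affineReflection q.1 q.2.1 q.2.2 y := by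
  unfold affineReflection
  fun_prop

theorem abs_inner_sub_le_of_mapsTo_affineReflection {K : Set E} {u w : E} {d R : ℝ}
    (hu : ‖u‖ = 1) (hR : K ⊆ closedBall 0 R) (hσ : MapsTo (affineReflection u w d) K K)
    {y : E} (hy : y ∈ K) : |⟪w, y⟫ - d| ≤ R := by
  have hyR : ‖y‖ ≤ R := mem_closedBall_zero_iff.mp (hR hy)
  have hσR : ‖affineReflection u w d y‖ ≤ R := mem_closedBall_zero_iff.mp (hR (hσ hy))
  have : 2 * |⟪w, y⟫ - d| ≤ 2 * R :=
    calc 2 * |⟪w, y⟫ - d| = ‖y - affineReflection u w d y‖ := by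
          simp [affineReflection, norm_smul, hu]
      _ ≤ ‖y‖ + ‖affineReflection u w d y‖ := norm_sub_le _ _
      _ ≤ 2 * R := by linarith
  linarith

theorem mul_norm_le_of_abs_inner_sub_le {K : Set E} {p w : E} {r d R : ℝ} (hr : 0 ≤ r)
    (hball : closedBall p r ⊆ K) (h : ∀ y ∈ K, |⟪w, y⟫ - d| ≤ R) : r * ‖w‖ ≤ 2 * R := by
  rcases eq_or_ne w 0 with rfl | hw
  · simpa using (abs_nonneg _).trans (h p (hball (mem_closedBall_self hr)))
  have hw' : 0 < ‖w‖ := norm_pos_iff.mpr hw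
  set y := p + (r / ‖w‖) • w
  have hy : y ∈ K := hball (by simp [y, norm_smul, abs_of_nonneg hr, hw'.ne'])
  have hdiff : ⟪w, y⟫ - ⟪w, p⟫ = r * ‖w‖ := by
    rw [inner_add_right, real_inner_smul_right, real_inner_self_eq_norm_sq]
    field_simp
    ring
  have h1 := abs_le.mp (h y hy)
  have h2 := abs_le.mp (h p (hball (mem_closedBall_self hr)))
  linarith [h1.2, h2.1]

def affineReflectionParams (K : Set E) : Set (E × E × ℝ) :=
  {q | ‖q.1‖ = 1 ∧ ⟪q.2.1, q.1⟫ = 1 ∧ MapsTo (affineReflection q.1 q.2.1 q.2.2) K K}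

theorem isClosed_setOf_mapsTo_affineReflection {K : Set E} (hK : IsClosed K) :
    IsClosed {q : E × E × ℝ | MapsTo (affineReflection q.1 q.2.1 q.2.2) K K} := by
  have : {q : E × E × ℝ | MapsTo (affineReflection q.1 q.2.1 q.2.2) K K} =
      ⋂ y ∈ K, (fun q : E × E × ℝ => affineReflection q.1 q.2.1 q.2.2 y) ⁻¹' K := by
    ext q
    simp [MapsTo]
  rw [this]
  exact isClosed_biInter fun y _ => hK.preimage (continuous_affineReflection_apply y)

theorem isCompact_affineReflectionParams [FiniteDimensional ℝ E] {K : Set E}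
    (hK : IsCompact K) (hint : (interior K).Nonempty) :
    IsCompact (affineReflectionParams K) := by
  obtain ⟨p, r, hr, hball⟩ := exists_closedBall_subset_of_interior_nonempty hint
  obtain ⟨R, hR⟩ := hK.isBounded.subset_closedBall 0
  have hclosed : IsClosed (affineReflectionParams K) :=
    (isClosed_eq (by fun_prop) continuous_const).inter
      ((isClosed_eq (by fun_prop) continuous_const).inter
        (isClosed_setOf_mapsTo_affineReflection hK.isClosed))
  set B := 2 * R / r
  have hsub : affineReflectionParams K ⊆
      closedBall (0 : E) 1 ×ˢ closedBall (0 : E) B ×ˢ closedBall (0 : ℝ) (B * ‖p‖ + R) := by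
    rintro ⟨u, w, d⟩ ⟨hu, -, hσ⟩
    have hwd : ∀ y ∈ K, |⟪w, y⟫ - d| ≤ R := fun y hy =>
      abs_inner_sub_le_of_mapsTo_affineReflection hu hR hσ hy
    have hw : ‖w‖ ≤ B := by
      rw [le_div_iff₀ hr, mul_comm]
      exact mul_norm_le_of_abs_inner_sub_le hr.le hball hwd
    have hd : |d| ≤ B * ‖p‖ + R := by
      have hp := abs_le.mp (hwd p (hball (mem_closedBall_self hr.le)))
      have hwp := abs_le.mp ((abs_real_inner_le_norm w p).trans
        (mul_le_mul_of_nonneg_right hw (norm_nonneg p)))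
      exact abs_le.mpr ⟨by linarith, by linarith⟩
    simp only [mem_prod, mem_closedBall_zero_iff, Real.norm_eq_abs]
    exact ⟨hu.le, hw, hd⟩
  exact isCompact_of_isClosed_isBounded hclosed
    ((isBounded_closedBall.prod (isBounded_closedBall.prod isBounded_closedBall)).subset hsub)

end AffineReflection

section Chords

variable {n : ℕ} {K : Set (EuclideanSpace ℝ (Fin n))} {u v w : EuclideanSpace ℝ (Fin n)}
  {c d : ℝ}

theorem chordMidpointsIn.smul (h : chordMidpointsIn K u v c) (a : ℝ) :
    chordMidpointsIn K u (a • v) (a * c) := fun x hx => by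
  rw [real_inner_smul_left, h x hx]

theorem chordMidpointsIn.inner_ne_zero (hint : (interior K).Nonempty) (hv : v ≠ 0)
    (h : chordMidpointsIn K u v c) : ⟪v, u⟫ ≠ 0 := by
  intro hvu
  obtain ⟨p, r, hr, hball⟩ := exists_closedBall_subset_of_interior_nonempty hint
  have hK : ∀ y ∈ K, |⟪v, y⟫ - c| ≤ 0 := fun y hy => by
    have := h y ⟨0, by simpa using hy⟩
    rw [inner_add_right, real_inner_smul_right, hvu, mul_zero, add_zero] at this
    simp [this]
  have := mul_norm_le_of_abs_inner_sub_le hr.le hball hK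
  exact hv (norm_le_zero_iff.mp (by nlinarith [norm_nonneg v]))

theorem chordMidpointsInHyperplane.exists_inner_eq_one (hint : (interior K).Nonempty)
    (h : chordMidpointsInHyperplane K u) : ∃ w d, ⟪w, u⟫ = 1 ∧ chordMidpointsIn K u w d := by
  obtain ⟨v, c, hv, hvc⟩ := h
  refine ⟨⟪v, u⟫⁻¹ • v, ⟪v, u⟫⁻¹ * c, ?_, hvc.smul _⟩
  rw [real_inner_smul_left, inv_mul_cancel₀ (hvc.inner_ne_zero hint hv)]

/-- The chord through `y ∈ K` has parameters `[α, β] ∋ 0`, and the reflection sends `y` to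
`y + (α + β) • u`, which lies on that chord. -/
theorem chordMidpointsIn.mapsTo_affineReflection (hK : IsCompact K) (hconv : Convex ℝ K)
    (hwu : ⟪w, u⟫ = 1) (h : chordMidpointsIn K u w d) :
    MapsTo (affineReflection u w d) K K := by
  intro y hy
  have hu : u ≠ 0 := by rintro rfl; simp at hwu
  have h0 : (0 : ℝ) ∈ {s : ℝ | y + s • u ∈ K} := by simpa using hy
  have hmid := h y ⟨0, h0⟩
  rw [inner_add_right, real_inner_smul_right, hwu, mul_one] at hmid
  have hσ : affineReflection u w d y =
      y + (sInf {s : ℝ | y + s • u ∈ K} + sSup {s : ℝ | y + s • u ∈ K}) • u := by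
    simpa [hmid.symm, ← sub_eq_add_neg, two_mul] using affineReflection_add_smul d hwu y 0
  rw [hσ]
  exact (hK.setOf_add_smul_mem y hu).sInf_add_sSup_mem
    (hconv.ordConnected_setOf_add_smul_mem y u) h0

theorem chordMidpointsIn_of_mapsTo_affineReflection (hK : Bornology.IsBounded K)
    (hwu : ⟪w, u⟫ = 1) (hσ : MapsTo (affineReflection u w d) K K) :
    chordMidpointsIn K u w d := by
  intro x hx
  have hu : u ≠ 0 := by rintro rfl; simp at hwu
  have hsum := sInf_add_sSup_eq_of_forall_sub_mem (a := 2 * (d - ⟪w, x⟫)) hx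
    (hK.setOf_add_smul_mem x hu) fun s hs => by
      simpa [affineReflection_add_smul d hwu] using hσ hs
  rw [inner_add_right, real_inner_smul_right, hwu, hsum]
  ring

end Chords

theorem stmt7 {n : ℕ} (K : Set (EuclideanSpace ℝ (Fin n)))
    (hKc : IsCompact K) (hKconv : Convex ℝ K) (hKint : (interior K).Nonempty)
    (T : Set (EuclideanSpace ℝ (Fin n)))
    (hT : T ⊆ Metric.sphere (0 : EuclideanSpace ℝ (Fin n)) 1)
    (hdense : Metric.sphere (0 : EuclideanSpace ℝ (Fin n)) 1 ⊆ closure T)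
    (hmid : ∀ u ∈ T, chordMidpointsInHyperplane K u) :
    ∀ u ∈ Metric.sphere (0 : EuclideanSpace ℝ (Fin n)) 1,
      chordMidpointsInHyperplane K u := by
  intro u hu
  have hTP : T ⊆ Prod.fst '' affineReflectionParams K := fun t ht => by
    obtain ⟨w, d, hwt, hwd⟩ := (hmid t ht).exists_inner_eq_one hKint
    exact ⟨(t, w, d), ⟨mem_sphere_zero_iff_norm.mp (hT ht), hwt,
      hwd.mapsTo_affineReflection hKc hKconv hwt⟩, rfl⟩
  have hclosed : IsClosed (Prod.fst '' affineReflectionParams K) :=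
    ((isCompact_affineReflectionParams hKc hKint).image continuous_fst).isClosed
  obtain ⟨⟨_, w, d⟩, ⟨-, hwu, hσ⟩, rfl⟩ := closure_minimal hTP hclosed (hdense hu)
  exact ⟨w, d, by rintro rfl; simp at hwu,
    chordMidpointsIn_of_mapsTo_affineReflection hKc.isBounded hwu hσ⟩
end
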